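/- Let R be a commutative ring, F a formal group law over R with formal inverse ι, and let H₂ ∈ R[[U,V]] be the unique power series such that H₂(−X·ι(X), −Y·ι(Y)) = F(X,Y)·F(ι(X),ι(Y))·F(ι(X),Y)·F(X,ι(Y)) in R[[X,Y]]. Then the diagonal substitution of H₂ vanishes: H₂(U,U) = 0 in R[[U]]. (In Buchstaber's terminology, the 2-valued series F̄²_t = 1 + H₁t + H₂t² associated to F is of type I.) -/

import Mathlib

noncomputable section

/-- The weight (total degree) of a multi-exponent. -/
def wt {τ : Type*} (d : τ →₀ ℕ) : ℕ := d.sum fun _ e => e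

/-- Substitution of a family of multivariate power series (each having zero constant
coefficient) into a multivariate power series in finitely many variables.  The coefficient
of the result in multidegree `d` is computed from a sufficiently large truncation of `f`;
this agrees with the usual substitution whenever every `a i` has zero constant coefficient. -/
def msubst {R : Type*} [CommRing R] {k : ℕ} {τ : Type*}
    (a : Fin k → MvPowerSeries τ R) (f : MvPowerSeries (Fin k) R) : MvPowerSeries τ R :=
  fun d => MvPowerSeries.coeff d
    (MvPolynomial.eval₂ (MvPowerSeries.C : R →+* MvPowerSeries τ R) a
      (MvPowerSeries.trunc R (Finsupp.equivFunOnFinite.symm fun _ => wt d + 1) f))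

/-- Substitution of a multivariate power series with zero constant coefficient into a
one-variable power series. -/
def psubst {R : Type*} [CommRing R] {τ : Type*}
    (a : MvPowerSeries τ R) (f : PowerSeries R) : MvPowerSeries τ R :=
  fun d => MvPowerSeries.coeff d
    (Polynomial.eval₂ (MvPowerSeries.C : R →+* MvPowerSeries τ R) a (PowerSeries.trunc (wt d + 1) f))

/-- A (one-dimensional, commutative) formal group law over `R`:
`F(X,0) = X`, `F(0,Y) = Y`, `F(X,Y) = F(Y,X)` and `F(F(X,Y),Z) = F(X,F(Y,Z))`. -/
structure IsFGL {R : Type*} [CommRing R] (F : MvPowerSeries (Fin 2) R) : Prop where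
  zero_right : msubst ![MvPowerSeries.X 0, 0] F = (MvPowerSeries.X 0 : MvPowerSeries (Fin 2) R)
  zero_left : msubst ![0, MvPowerSeries.X 1] F = (MvPowerSeries.X 1 : MvPowerSeries (Fin 2) R)
  comm : msubst ![MvPowerSeries.X 1, MvPowerSeries.X 0] F = F
  assoc : msubst ![msubst ![(MvPowerSeries.X 0 : MvPowerSeries (Fin 3) R), MvPowerSeries.X 1] F,
        MvPowerSeries.X 2] F
      = msubst ![(MvPowerSeries.X 0 : MvPowerSeries (Fin 3) R),
        msubst ![MvPowerSeries.X 1, MvPowerSeries.X 2] F] F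

/-- `ι` is the formal inverse of the formal group law `F`: it is composable and
`F(X, ι(X)) = 0` in `R[[X]]`. -/
def IsFormalInverse {R : Type*} [CommRing R] (F : MvPowerSeries (Fin 2) R)
    (ι : PowerSeries R) : Prop :=
  PowerSeries.constantCoeff ι = 0 ∧
    msubst ![(PowerSeries.X : PowerSeries R), ι] F = 0

end

/-- `ι(X)` viewed as a two-variable power series. -/
noncomputable def iX {R : Type*} [CommRing R] (ι : PowerSeries R) : MvPowerSeries (Fin 2) R :=
  psubst (MvPowerSeries.X 0) ι

/-- `ι(Y)` viewed as a two-variable power series. -/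
noncomputable def iY {R : Type*} [CommRing R] (ι : PowerSeries R) : MvPowerSeries (Fin 2) R :=
  psubst (MvPowerSeries.X 1) ι

/-!
Put `g(X) = -X·ι(X)`. Substituting `X = Y` in the defining identity of `H₂` kills the right-hand
side, which contains the factor `F(X, ι(X)) = 0`; hence `H₂(U, U)` vanishes after substituting
`U = g(X)`. Since `F = X + Y + …` forces `ι(X) = -X + …`, we have `g(X) = X²·(unit)`, and
substituting such a series is injective: if `h = X^n·h'` with `h'(0) ≠ 0`, then
`h(g) = X^{2n}·(unit)·h'(g)` and `h'(g)(0) = h'(0) ≠ 0`.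
-/

theorem wt_eq_degree {τ : Type*} (d : τ →₀ ℕ) : wt d = d.degree := rfl

section Substitution

open MvPowerSeries

variable {R : Type*} [CommRing R] {τ : Type*}

-- A bare `rfl` makes the kernel unfold `eval₂` and time out; the two steps below do not.
theorem coeff_msubst {k : ℕ} (a : Fin k → MvPowerSeries τ R) (f : MvPowerSeries (Fin k) R)
    (d : τ →₀ ℕ) :
    coeff d (msubst a f) = coeff d (MvPolynomial.eval₂ C a
      (trunc R (Finsupp.equivFunOnFinite.symm fun _ => wt d + 1) f)) := by
  have hf : msubst a f = fun d => coeff d (MvPolynomial.eval₂ C a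
      (trunc R (Finsupp.equivFunOnFinite.symm fun _ => wt d + 1) f)) := rfl
  have happ : ∀ g : MvPowerSeries τ R, coeff d g = g d := fun _ => rfl
  rw [happ (msubst a f), hf]

/-- The truncation in `msubst` only drops monomials of total degree `> wt d`; after substituting
series without constant term they do not reach degree `d`. (For `k = 0` the truncation is empty
and `msubst` is junk.) -/
theorem msubst_eq_subst {k : ℕ} [NeZero k] {a : Fin k → MvPowerSeries τ R}
    (ha : ∀ i, constantCoeff (a i) = 0) (f : MvPowerSeries (Fin k) R) :
    msubst a f = subst a f := by
  have ha' : HasSubst a := hasSubst_of_constantCoeff_zero ha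
  ext d
  rw [coeff_msubst]
  set n : Fin k →₀ ℕ := Finsupp.equivFunOnFinite.symm fun _ => wt d + 1
  set p : MvPowerSeries (Fin k) R := ↑(trunc R n f)
  have htail : (wt d + 1 : ℕ∞) ≤ order (f - p) := by
    refine le_order fun e he => ?_
    have hle : ∀ i, e i < n i := fun i =>
      (Finsupp.le_degree i e).trans_lt (by exact_mod_cast he)
    have hen : e < n := lt_of_le_of_ne (fun i => (hle i).le) fun h => (hle 0).ne (by rw [h])
    rw [map_sub, MvPolynomial.coeff_coe, coeff_trunc, if_pos hen, sub_self]
  have hsmall : coeff d (subst a (f - p)) = 0 := by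
    refine coeff_of_lt_order (lt_of_lt_of_le ?_ (le_order_subst ha' _))
    have h1 : 1 ≤ ⨅ i, (a i).order :=
      le_iInf fun i => one_le_order_iff_constCoeff_eq_zero.mpr (ha i)
    calc (d.degree : ℕ∞) < 1 * (wt d + 1 : ℕ∞) := by
          rw [one_mul, wt_eq_degree]; exact_mod_cast Nat.lt_succ_self _
      _ ≤ _ := mul_le_mul' h1 htail
  rw [subst_sub ha', map_sub, sub_eq_zero, subst_coe, MvPolynomial.aeval_def, ← c_eq_algebraMap]
    at hsmall
  exact hsmall.symm

theorem msubst_pair_eq_subst {a b : MvPowerSeries τ R} (ha : constantCoeff a = 0)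
    (hb : constantCoeff b = 0) (f : MvPowerSeries (Fin 2) R) :
    msubst ![a, b] f = subst ![a, b] f :=
  msubst_eq_subst (Fin.forall_fin_two.mpr ⟨ha, hb⟩) f

theorem coeff_psubst (c : MvPowerSeries τ R) (f : PowerSeries R) (d : τ →₀ ℕ) :
    coeff d (psubst c f) = coeff d (Polynomial.eval₂ C c (PowerSeries.trunc (wt d + 1) f)) := by
  have hf : psubst c f = fun d => coeff d
      (Polynomial.eval₂ C c (PowerSeries.trunc (wt d + 1) f)) := rfl
  have happ : ∀ g : MvPowerSeries τ R, coeff d g = g d := fun _ => rfl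
  rw [happ (psubst c f), hf]

theorem psubst_eq_subst {c : MvPowerSeries τ R} (hc : constantCoeff c = 0) (f : PowerSeries R) :
    psubst c f = PowerSeries.subst c f := by
  have hc' : PowerSeries.HasSubst c := PowerSeries.HasSubst.of_constantCoeff_zero hc
  ext d
  rw [coeff_psubst]
  set p : PowerSeries R := ↑(PowerSeries.trunc (wt d + 1) f)
  have htail : (wt d + 1 : ℕ∞) ≤ PowerSeries.order (f - p) := by
    refine PowerSeries.nat_le_order _ _ fun i hi => ?_
    rw [map_sub, Polynomial.coeff_coe, PowerSeries.coeff_trunc, if_pos hi, sub_self]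
  have hsmall : coeff d (PowerSeries.subst c (f - p)) = 0 := by
    refine coeff_of_lt_order (lt_of_lt_of_le ?_ (PowerSeries.le_order_subst_left hc))
    exact lt_of_lt_of_le (by exact_mod_cast Nat.lt_succ_self _) htail
  rw [PowerSeries.subst_sub hc', map_sub, sub_eq_zero, PowerSeries.subst_coe hc',
    Polynomial.aeval_def, ← c_eq_algebraMap] at hsmall
  exact hsmall.symm

theorem iX_eq_subst (ι : PowerSeries R) :
    iX ι = PowerSeries.subst (X 0 : MvPowerSeries (Fin 2) R) ι :=
  psubst_eq_subst (constantCoeff_X 0) ι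

theorem iY_eq_subst (ι : PowerSeries R) :
    iY ι = PowerSeries.subst (X 1 : MvPowerSeries (Fin 2) R) ι :=
  psubst_eq_subst (constantCoeff_X 1) ι

end Substitution

namespace MvPowerSeries

variable {R : Type*} [CommRing R] {σ τ : Type*}

theorem two_le_order_sub_linear [Fintype σ] (f : MvPowerSeries σ R) :
    2 ≤ order (f - (C (constantCoeff f) + ∑ i, C (coeff (Finsupp.single i 1) f) * X i)) := by
  classical
  refine le_order fun e he => ?_
  have he' : e.degree = 0 ∨ e.degree = 1 := by
    have : e.degree < 2 := by exact_mod_cast he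
    omega
  rcases he' with he0 | he1
  · rw [Finsupp.degree_eq_zero_iff] at he0
    subst he0
    simp
  · obtain ⟨j, rfl⟩ := (Finsupp.sum_eq_one_iff e).mp he1
    simp [coeff_X, Finsupp.single_eq_single_iff, coeff_C]

theorem coeff_subst_of_degree_lt_two [Fintype σ] {a : σ → MvPowerSeries τ R}
    (ha : ∀ i, constantCoeff (a i) = 0) (f : MvPowerSeries σ R) {d : τ →₀ ℕ}
    (hd : d.degree < 2) :
    coeff d (subst a f) =
      coeff d (C (constantCoeff f) + ∑ i, C (coeff (Finsupp.single i 1) f) * a i) := by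
  have ha' : HasSubst a := hasSubst_of_constantCoeff_zero ha
  set L : MvPowerSeries σ R :=
    C (constantCoeff f) + ∑ i, C (coeff (Finsupp.single i 1) f) * X i
  have hL : subst a L = C (constantCoeff f) + ∑ i, C (coeff (Finsupp.single i 1) f) * a i := by
    rw [← coe_substAlgHom ha', map_add, map_sum]
    simp only [map_mul, substAlgHom_X, c_eq_algebraMap, AlgHom.commutes]
  have hrest : coeff d (subst a (f - L)) = 0 := by
    refine coeff_of_lt_order (lt_of_lt_of_le ?_ (le_order_subst ha' _))
    have h1 : 1 ≤ ⨅ i, (a i).order :=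
      le_iInf fun i => one_le_order_iff_constCoeff_eq_zero.mpr (ha i)
    calc (d.degree : ℕ∞) < 1 * 2 := by rw [one_mul]; exact_mod_cast hd
      _ ≤ _ := mul_le_mul' h1 (two_le_order_sub_linear f)
  rw [subst_sub ha', map_sub, sub_eq_zero, hL] at hrest
  exact hrest

theorem coeff_subst_pair_of_degree_lt_two {a b : MvPowerSeries τ R} (ha : constantCoeff a = 0)
    (hb : constantCoeff b = 0) (f : MvPowerSeries (Fin 2) R) {d : τ →₀ ℕ}
    (hd : d.degree < 2) :
    coeff d (subst ![a, b] f) = coeff d (C (constantCoeff f) +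
      (C (coeff (Finsupp.single 0 1) f) * a + C (coeff (Finsupp.single 1 1) f) * b)) := by
  rw [coeff_subst_of_degree_lt_two (Fin.forall_fin_two.mpr ⟨ha, hb⟩) f hd, Fin.sum_univ_two]
  rfl

theorem subst_neg {a : σ → MvPowerSeries τ R} (ha : HasSubst a) (f : MvPowerSeries σ R) :
    subst a (-f) = -subst a f := by
  rw [← coe_substAlgHom ha, map_neg]

theorem subst_subst_pair {b : σ → MvPowerSeries τ R} (hb : HasSubst b)
    {a₀ a₁ : MvPowerSeries σ R} (h₀ : constantCoeff a₀ = 0) (h₁ : constantCoeff a₁ = 0)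
    (f : MvPowerSeries (Fin 2) R) :
    subst b (subst ![a₀, a₁] f) = subst ![subst b a₀, subst b a₁] f := by
  have ha : HasSubst ![a₀, a₁] :=
    hasSubst_of_constantCoeff_zero (Fin.forall_fin_two.mpr ⟨h₀, h₁⟩)
  rw [subst_comp_subst_apply ha hb]
  congr 1
  funext i
  fin_cases i <;> rfl

theorem subst_powerSeries_subst_X {a : σ → MvPowerSeries τ R} (ha : HasSubst a) (i : σ)
    (f : PowerSeries R) :
    subst a (PowerSeries.subst (X i : MvPowerSeries σ R) f) = PowerSeries.subst (a i) f := by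
  rw [PowerSeries.subst, PowerSeries.subst, subst_comp_subst_apply _ ha]
  · simp [subst_X ha]
  · exact (PowerSeries.HasSubst.X i).const

theorem subst_pair_self {g : MvPowerSeries τ R} (hg : constantCoeff g = 0)
    (f : MvPowerSeries (Fin 2) R) :
    subst ![g, g] f =
      PowerSeries.subst g (subst ![(PowerSeries.X : PowerSeries R), PowerSeries.X] f) := by
  have hg' : PowerSeries.HasSubst g := PowerSeries.HasSubst.of_constantCoeff_zero hg
  have hXX : HasSubst ![(PowerSeries.X : PowerSeries R), PowerSeries.X] :=
    hasSubst_of_constantCoeff_zero (Fin.forall_fin_two.mpr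
      ⟨PowerSeries.constantCoeff_X, PowerSeries.constantCoeff_X⟩)
  rw [PowerSeries.subst, subst_comp_subst_apply hXX hg'.const]
  congr 1
  funext i
  fin_cases i <;> simp [← PowerSeries.subst_def, PowerSeries.subst_X hg']

end MvPowerSeries

namespace PowerSeries

variable {R : Type*} [CommRing R]

theorem exists_isUnit_eq_X_mul {f : R⟦X⟧} (h0 : constantCoeff f = 0) (h1 : IsUnit (coeff 1 f)) :
    ∃ u, IsUnit u ∧ f = X * u := by
  obtain ⟨u, rfl⟩ := X_dvd_iff.mpr h0
  refine ⟨u, ?_, rfl⟩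
  rw [isUnit_iff_constantCoeff]
  rwa [← zero_add 1, coeff_succ_X_mul, coeff_zero_eq_constantCoeff_apply] at h1

theorem constantCoeff_subst_of_constantCoeff_eq_zero {g : R⟦X⟧} (hg : constantCoeff g = 0)
    (f : R⟦X⟧) : constantCoeff (subst g f : R⟦X⟧) = constantCoeff f := by
  have hg' : HasSubst g := HasSubst.of_constantCoeff_zero' hg
  conv_lhs => rw [eq_X_mul_shift_add_const f]
  rw [subst_add hg', subst_mul hg', subst_X hg', subst_C]
  change constantCoeff (g * _ + C _) = _
  rw [map_add, map_mul, hg, zero_mul, zero_add, constantCoeff_C]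

theorem eq_zero_of_subst_X_pow_mul_eq_zero {m : ℕ} (hm : m ≠ 0) {u : R⟦X⟧} (hu : IsUnit u)
    {f : R⟦X⟧} (h : subst (X ^ m * u) f = 0) : f = 0 := by
  have hg : constantCoeff (X ^ m * u) = 0 := by simp [hm]
  have hg' : HasSubst (X ^ m * u) := HasSubst.of_constantCoeff_zero' hg
  set n := f.order.toNat
  have hsplit : subst (X ^ m * u) f =
      X ^ (m * n) * (u ^ n * subst (X ^ m * u) (divXPowOrder f)) := by
    conv_lhs => rw [← X_pow_order_mul_divXPowOrder (f := f)]
    rw [subst_mul hg', subst_pow hg', subst_X hg', mul_pow, pow_mul, mul_assoc]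
  have hquot : subst (X ^ m * u) (divXPowOrder f) = 0 := by
    rw [hsplit, ← mul_zero (X ^ (m * n) : R⟦X⟧)] at h
    exact (hu.pow n).mul_right_eq_zero.mp (X_pow_mul_injective h)
  rw [← constantCoeff_divXPowOrder_eq_zero_iff,
    ← constantCoeff_subst_of_constantCoeff_eq_zero hg, hquot, map_zero]

end PowerSeries

section FormalGroupLaw

open MvPowerSeries

variable {R : Type*} [CommRing R] {F : MvPowerSeries (Fin 2) R} {ι : PowerSeries R}

theorem IsFGL.constantCoeff_eq_zero (hF : IsFGL F) : constantCoeff F = 0 := by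
  have h := congrArg (coeff 0) hF.zero_right
  rw [msubst_pair_eq_subst (constantCoeff_X 0) (map_zero _),
    coeff_subst_pair_of_degree_lt_two (constantCoeff_X 0) (map_zero _) _ (by simp)] at h
  simpa using h

theorem IsFGL.coeff_single_zero_one (hF : IsFGL F) : coeff (Finsupp.single 0 1) F = 1 := by
  have h := congrArg (coeff (Finsupp.single 0 1)) hF.zero_right
  rw [msubst_pair_eq_subst (constantCoeff_X 0) (map_zero _),
    coeff_subst_pair_of_degree_lt_two (constantCoeff_X 0) (map_zero _) _ (by simp)] at h
  simpa [coeff_X, coeff_C] using h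

theorem IsFGL.coeff_single_one_one (hF : IsFGL F) : coeff (Finsupp.single 1 1) F = 1 := by
  have h := congrArg (coeff (Finsupp.single 1 1)) hF.zero_left
  rw [msubst_pair_eq_subst (map_zero _) (constantCoeff_X 1),
    coeff_subst_pair_of_degree_lt_two (map_zero _) (constantCoeff_X 1) _ (by simp)] at h
  simpa [coeff_X, coeff_C] using h

theorem IsFormalInverse.coeff_one_eq_neg_one (hF : IsFGL F) (hι : IsFormalInverse F ι) :
    PowerSeries.coeff 1 ι = -1 := by
  have h := congrArg (PowerSeries.coeff 1) hι.2
  rw [msubst_pair_eq_subst PowerSeries.constantCoeff_X hι.1, PowerSeries.coeff,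
    coeff_subst_pair_of_degree_lt_two PowerSeries.constantCoeff_X hι.1 _ (by simp)] at h
  simp only [hF.constantCoeff_eq_zero, hF.coeff_single_zero_one, hF.coeff_single_one_one, map_zero,
    map_one, one_mul, zero_add, map_add, PowerSeries.coeff_coeToMvPowerSeries,
    PowerSeries.coeff_one_X] at h
  linear_combination h

theorem IsFormalInverse.subst_neg_X_mul_diag_eq_zero (hι : IsFormalInverse F ι)
    {H₂ : MvPowerSeries (Fin 2) R}
    (hH₂ : msubst ![-(X 0 * iX ι), -(X 1 * iY ι)] H₂
        = F * msubst ![iX ι, iY ι] F * (msubst ![iX ι, X 1] F * msubst ![X 0, iY ι] F)) :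
    PowerSeries.subst (-(PowerSeries.X * ι))
      (subst ![(PowerSeries.X : PowerSeries R), PowerSeries.X] H₂) = 0 := by
  obtain ⟨hι0, hιF⟩ := hι
  have hdiag : HasSubst ![(PowerSeries.X : PowerSeries R), PowerSeries.X] :=
    hasSubst_of_constantCoeff_zero (Fin.forall_fin_two.mpr
      ⟨PowerSeries.constantCoeff_X, PowerSeries.constantCoeff_X⟩)
  have hιX (i : Fin 2) :
      constantCoeff (PowerSeries.subst (X i : MvPowerSeries (Fin 2) R) ι) = 0 :=
    PowerSeries.constantCoeff_subst_eq_zero (constantCoeff_X i) _ hι0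
  have hιX_diag (i : Fin 2) : subst ![(PowerSeries.X : PowerSeries R), PowerSeries.X]
      (PowerSeries.subst (X i : MvPowerSeries (Fin 2) R) ι) = ι := by
    rw [subst_powerSeries_subst_X hdiag]
    fin_cases i <;> exact PowerSeries.X_subst ι
  rw [iX_eq_subst, iY_eq_subst, msubst_pair_eq_subst (by simp) (by simp),
    msubst_pair_eq_subst (hιX 0) (hιX 1), msubst_pair_eq_subst (hιX 0) (constantCoeff_X 1),
    msubst_pair_eq_subst (constantCoeff_X 0) (hιX 1)] at hH₂
  rw [msubst_pair_eq_subst PowerSeries.constantCoeff_X hι0] at hιF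
  have key := congrArg (subst ![(PowerSeries.X : PowerSeries R), PowerSeries.X]) hH₂
  rw [subst_subst_pair hdiag (by simp [hιX]) (by simp [hιX]), subst_mul hdiag, subst_mul hdiag,
    subst_mul hdiag, subst_subst_pair hdiag (constantCoeff_X 0) (hιX 1)] at key
  simp only [subst_neg hdiag, subst_mul hdiag, subst_X hdiag, hιX_diag, Matrix.cons_val_zero,
    Matrix.cons_val_one, Matrix.cons_val_fin_one, hιF, mul_zero] at key
  have hg : constantCoeff (-(PowerSeries.X * ι)) = 0 := by
    rw [map_neg, map_mul, neg_eq_zero]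
    exact mul_eq_zero_of_right _ hι0
  rw [← subst_pair_self hg, key]

end FormalGroupLaw

/-- If `H₂ ∈ R[[U,V]]` is the unique power series with
`H₂(−X·ι(X), −Y·ι(Y)) = F(X,Y)·F(ι(X),ι(Y))·F(ι(X),Y)·F(X,ι(Y))`, then the diagonal
substitution of `H₂` vanishes: `H₂(U,U) = 0` in `R[[U]]`. -/
theorem stmt_6 {R : Type*} [CommRing R] (F : MvPowerSeries (Fin 2) R) (hF : IsFGL F)
    (ι : PowerSeries R) (hι : IsFormalInverse F ι)
    (H₂ : MvPowerSeries (Fin 2) R)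
    (hH₂ : msubst ![-(MvPowerSeries.X 0 * iX ι), -(MvPowerSeries.X 1 * iY ι)] H₂
        = F * msubst ![iX ι, iY ι] F
            * (msubst ![iX ι, MvPowerSeries.X 1] F * msubst ![MvPowerSeries.X 0, iY ι] F)) :
    msubst ![(PowerSeries.X : PowerSeries R), PowerSeries.X] H₂ = 0 := by
  obtain ⟨u, hu, hιu⟩ := PowerSeries.exists_isUnit_eq_X_mul hι.1
    (by rw [hι.coeff_one_eq_neg_one hF]; exact isUnit_one.neg)
  have hg : -(PowerSeries.X * ι) = PowerSeries.X ^ 2 * -u := by rw [hιu]; ring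
  rw [msubst_pair_eq_subst PowerSeries.constantCoeff_X PowerSeries.constantCoeff_X]
  exact PowerSeries.eq_zero_of_subst_X_pow_mul_eq_zero two_ne_zero hu.neg
    (hg ▸ hι.subst_neg_X_mul_diag_eq_zero hH₂)
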